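/- Ignoring the stockout term, the expected total cost E[TC(a,Q,t)] = C_o Q E[R_t] + C_h E[∫_0^t X_s ds] satisfies E[TC(a,Q,t)] = C_o Q Σ_{n≥1} P(T_n < t) + C_h x t − C_h (μ + αλ) t²/2 + C_h Q Σ_{n≥1} ( t P(T_n < t) − E[T_n 1_{T_n < t}] ). -/

import Mathlib

/-!
Taking the expectation inside the time integral (Fubini) turns the holding cost into
`∫₀ᵗ (x - (μ + α λ) s + Q E[R_s]) ds`, and `E[R_s] = ∑ₙ P(Tₙ < s)` by monotone convergence.
After exchanging the sum with the time integral, each term is computed by Fubini once more: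
for `Tₙ ≥ 0`, `∫₀ᵗ P(Tₙ < s) ds = E[(t - Tₙ)⁺] = t P(Tₙ < t) - E[Tₙ; Tₙ < t]`.
-/

open MeasureTheory Set

open scoped ENNReal

theorem ENNReal.tsum_ne_top_of_summable_toReal {α : Type*} {f : α → ℝ≥0∞} (hf : ∀ a, f a ≠ ∞)
    (h : Summable fun a => (f a).toReal) : ∑' a, f a ≠ ∞ := by
  simpa [ENNReal.coe_toNNReal, hf] using
    ENNReal.tsum_coe_ne_top_iff_summable.2 (NNReal.summable_coe.1 h)

section

variable {Ω : Type*} [MeasurableSpace Ω] {μ : Measure Ω}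

theorem integrable_and_integral_eq_tsum_of_hasSum_indicator_one {A : ℕ → Set Ω}
    (hA : ∀ n, MeasurableSet (A n)) (hfin : ∑' n, μ (A n) ≠ ∞) {R : Ω → ℝ}
    (hR : ∀ ω, HasSum (fun n => (A n).indicator 1 ω) (R ω)) :
    Integrable R μ ∧ ∫ ω, R ω ∂μ = ∑' n, μ.real (A n) := by
  set R' : Ω → ℝ≥0∞ := fun ω => ∑' n, (A n).indicator 1 ω
  have hR' : R = fun ω => (R' ω).toReal := by
    ext ω
    have hind : ∀ n, (A n).indicator (1 : Ω → ℝ≥0∞) ω ≠ ∞ ∧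
        ((A n).indicator (1 : Ω → ℝ≥0∞) ω).toReal = (A n).indicator 1 ω :=
      fun n => by by_cases h : ω ∈ A n <;> simp [h]
    rw [← (hR ω).tsum_eq, ENNReal.tsum_toReal_eq fun n => (hind n).1,
      tsum_congr fun n => (hind n).2]
  have hR'meas : Measurable R' :=
    Measurable.tsum fun n => measurable_one.indicator (hA n)
  have hR'lint : ∫⁻ ω, R' ω ∂μ = ∑' n, μ (A n) := by
    rw [lintegral_tsum fun n => (measurable_one.indicator (hA n)).aemeasurable]
    exact tsum_congr fun n => lintegral_indicator_one (hA n)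
  subst hR'
  refine ⟨integrable_toReal_of_lintegral_ne_top hR'meas.aemeasurable (hR'lint ▸ hfin), ?_⟩
  rw [integral_toReal hR'meas.aemeasurable (ae_lt_top hR'meas (hR'lint ▸ hfin)), hR'lint,
    ENNReal.tsum_toReal_eq fun n => ne_top_of_le_ne_top hfin (ENNReal.le_tsum n)]
  rfl

variable [IsFiniteMeasure μ]

theorem setIntegral_Ioc_measureReal_lt {f : Ω → ℝ} (hf : Measurable f) (hf_nonneg : 0 ≤ f)
    (t : ℝ) :
    ∫ s in Ioc 0 t, μ.real {ω | f ω < s}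
      = t * μ.real {ω | f ω < t} - ∫ ω in {ω | f ω < t}, f ω ∂μ := by
  set E := {p : ℝ × Ω | f p.2 < p.1}
  have hE : MeasurableSet E := measurableSet_lt (hf.comp measurable_snd) measurable_fst
  have hlt : MeasurableSet {ω | f ω < t} := measurableSet_lt hf measurable_const
  have hsection : ∀ ω, ∫ s in Ioc 0 t, E.indicator (1 : ℝ × Ω → ℝ) (s, ω)
      = {ω | f ω < t}.indicator (fun ω => t - f ω) ω := by
    intro ω
    have hIoi : Ioi (f ω) ∩ Ioc 0 t = Ioc (f ω) t := by
      ext s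
      simp only [mem_inter_iff, mem_Ioi, mem_Ioc]
      exact ⟨fun h => ⟨h.1, h.2.2⟩, fun h => ⟨h.1, (hf_nonneg ω).trans_lt h.1, h.2⟩⟩
    change ∫ s in Ioc 0 t, (Ioi (f ω)).indicator 1 s = _
    rw [integral_indicator_one measurableSet_Ioi, measureReal_restrict_apply measurableSet_Ioi,
      hIoi, Real.volume_real_Ioc]
    by_cases h : f ω < t
    · simp [h, h.le]
    · simp [h, not_lt.1 h]
  calc ∫ s in Ioc 0 t, μ.real {ω | f ω < s}
      = ∫ s in Ioc 0 t, ∫ ω, E.indicator 1 (s, ω) ∂μ := by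
        congr 1; ext s
        exact (integral_indicator_one (measurableSet_lt hf measurable_const)).symm
    _ = ∫ ω, (∫ s in Ioc 0 t, E.indicator 1 (s, ω)) ∂μ :=
        integral_integral_swap ((integrable_const 1).indicator hE)
    _ = ∫ ω in {ω | f ω < t}, (t - f ω) ∂μ := by
        simp_rw [hsection]; exact integral_indicator hlt
    _ = t * μ.real {ω | f ω < t} - ∫ ω in {ω | f ω < t}, f ω ∂μ := by
        rw [integral_sub (integrable_const t) ?_, setIntegral_const, smul_eq_mul, mul_comm]
        refine Measure.integrableOn_of_bounded (M := t) (measure_ne_top _ _)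
          hf.aestronglyMeasurable ?_
        filter_upwards [ae_restrict_mem hlt] with ω hω
        exact (Real.norm_of_nonneg (hf_nonneg ω)).trans_le hω.le

theorem monotone_measureReal_lt (f : Ω → ℝ) : Monotone fun s => μ.real {ω | f ω < s} :=
  fun _ _ h => measureReal_mono fun _ hω => lt_of_lt_of_le hω h

section CountingProcess

variable {T : ℕ → Ω → ℝ} {t : ℝ}

theorem summable_measureReal_lt_of_le (hsum : Summable fun n => μ.real {ω | T n ω < t}) {s : ℝ}
    (hs : s ≤ t) : Summable fun n => μ.real {ω | T n ω < s} :=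
  hsum.of_nonneg_of_le (fun _ => measureReal_nonneg) fun n => monotone_measureReal_lt (T n) hs

theorem intervalIntegrable_tsum_measureReal_lt (hsum : Summable fun n => μ.real {ω | T n ω < t})
    (ht : 0 ≤ t) : IntervalIntegrable (fun s => ∑' n, μ.real {ω | T n ω < s}) volume 0 t := by
  refine MonotoneOn.intervalIntegrable fun s₁ hs₁ s₂ hs₂ h => ?_
  rw [uIcc_of_le ht] at hs₁ hs₂
  exact (summable_measureReal_lt_of_le hsum hs₁.2).tsum_le_tsum
    (fun n => monotone_measureReal_lt (T n) h) (summable_measureReal_lt_of_le hsum hs₂.2)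

theorem integrable_and_integral_of_hasSum_ite_lt (hT : ∀ n, Measurable (T n))
    (hsum : Summable fun n => μ.real {ω | T n ω < t}) {s : ℝ} (hs : s ≤ t) {R : Ω → ℝ}
    (hR : ∀ ω, HasSum (fun n => if T n ω < s then (1 : ℝ) else 0) (R ω)) :
    Integrable R μ ∧ ∫ ω, R ω ∂μ = ∑' n, μ.real {ω | T n ω < s} :=
  integrable_and_integral_eq_tsum_of_hasSum_indicator_one
    (fun n => measurableSet_lt (hT n) measurable_const)
    (ENNReal.tsum_ne_top_of_summable_toReal (fun n => measure_ne_top μ _)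
      (summable_measureReal_lt_of_le hsum hs))
    (by simpa only [indicator_apply, mem_ofPred_eq, Pi.one_apply] using hR)

theorem setIntegral_Ioc_tsum_measureReal_lt (hT : ∀ n, Measurable (T n))
    (hT_nonneg : ∀ n, 0 ≤ T n) (hsum : Summable fun n => μ.real {ω | T n ω < t}) :
    ∫ s in Ioc 0 t, ∑' n, μ.real {ω | T n ω < s}
      = ∑' n, (t * μ.real {ω | T n ω < t} - ∫ ω in {ω | T n ω < t}, T n ω ∂μ) := by
  have hint : ∀ n, IntegrableOn (fun s => μ.real {ω | T n ω < s}) (Ioc 0 t) := fun n =>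
    ((monotone_measureReal_lt (T n)).monotoneOn _).integrableOn_isCompact isCompact_Icc
      |>.mono_set Ioc_subset_Icc_self
  have hbound : ∀ n, ∫ s in Ioc 0 t, ‖μ.real {ω | T n ω < s}‖
      ≤ μ.real {ω | T n ω < t} * volume.real (Ioc 0 t) := fun n =>
    (Real.le_norm_self _).trans <| norm_setIntegral_le_of_norm_le_const measure_Ioc_lt_top
      (f := fun s => ‖μ.real {ω | T n ω < s}‖) fun s hs => by
        rw [norm_norm, Real.norm_of_nonneg measureReal_nonneg]
        exact monotone_measureReal_lt (T n) hs.2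
  rw [← integral_tsum_of_summable_integral_norm hint <| (hsum.mul_right _).of_nonneg_of_le
    (fun _ => integral_nonneg fun _ => norm_nonneg _) hbound]
  exact tsum_congr fun n => setIntegral_Ioc_measureReal_lt (hT n) (hT_nonneg n) t

end CountingProcess

end

theorem expected_total_cost_general {Ω : Type*} [MeasurableSpace Ω] (P : Measure Ω)
    [IsProbabilityMeasure P] (N : ℝ → Ω → ℝ) (T : ℕ → Ω → ℝ) (R : ℝ → Ω → ℝ)
    (x Q μ α lam t Co Ch : ℝ) (ht : 0 < t)
    (hNint : ∀ s, Integrable (N s) P) (hNmean : ∀ s, ∫ ω, N s ω ∂P = lam * s)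
    (hTmeas : ∀ n, Measurable (T n)) (hTpos : ∀ n ω, 0 ≤ T n ω)
    (hR : ∀ s ω, HasSum (fun n : ℕ => if T n ω < s then (1:ℝ) else 0) (R s ω))
    (hsum : Summable fun n : ℕ => (P {ω | T n ω < t}).toReal)
    (hX : Integrable (fun p : ℝ × Ω => x - (μ * p.1 + α * N p.1 p.2) + Q * R p.1 p.2)
        ((volume.restrict (Set.Ioc 0 t)).prod P)) :
    ∫ ω, (Co * Q * R t ω
        + Ch * ∫ s in (0:ℝ)..t, (x - (μ * s + α * N s ω) + Q * R s ω)) ∂P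
      = Co * Q * (∑' n : ℕ, (P {ω | T n ω < t}).toReal)
        + Ch * x * t - Ch * (μ + α * lam) * t ^ 2 / 2
        + Ch * Q * ∑' n : ℕ, (t * (P {ω | T n ω < t}).toReal
            - ∫ ω in {ω | T n ω < t}, T n ω ∂P) := by
  set H := fun s => ∑' n, P.real {ω | T n ω < s}
  have hR_int : ∀ s ≤ t, Integrable (R s) P ∧ ∫ ω, R s ω ∂P = H s := fun s hs =>
    integrable_and_integral_of_hasSum_ite_lt hTmeas hsum hs (hR s)
  have hX_mean : ∀ s ≤ t, ∫ ω, (x - (μ * s + α * N s ω) + Q * R s ω) ∂P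
      = x - (μ + α * lam) * s + Q * H s := by
    intro s hs
    have hN := hNint s
    have hRs := (hR_int s hs).1
    rw [integral_add (by fun_prop) (by fun_prop), integral_sub (by fun_prop) (by fun_prop),
      integral_add (by fun_prop) (by fun_prop)]
    simp only [integral_const_mul, integral_const, probReal_univ, one_smul, hNmean,
      (hR_int s hs).2]
    ring
  calc _ = Co * Q * H t + Ch * ∫ s in (0:ℝ)..t, (x - (μ + α * lam) * s + Q * H s) := by
        simp_rw [intervalIntegral.integral_of_le ht.le]
        rw [integral_add ((hR_int t le_rfl).1.const_mul _) (hX.integral_prod_right.const_mul Ch),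
          integral_const_mul, integral_const_mul, (hR_int t le_rfl).2, ← integral_integral_swap hX,
          setIntegral_congr_fun measurableSet_Ioc fun s hs => hX_mean s hs.2]
    _ = _ := by
        rw [intervalIntegral.integral_add (Continuous.intervalIntegrable (by fun_prop) _ _)
            ((intervalIntegrable_tsum_measureReal_lt hsum ht.le).const_mul Q),
          intervalIntegral.integral_sub intervalIntegrable_const
            (Continuous.intervalIntegrable (by fun_prop) _ _), intervalIntegral.integral_const_mul,
          intervalIntegral.integral_const_mul, integral_id, intervalIntegral.integral_const,
          intervalIntegral.integral_of_le ht.le,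
          setIntegral_Ioc_tsum_measureReal_lt hTmeas hTpos hsum]
        simp only [H, measureReal_def, smul_eq_mul]
        ring

/-- Expected total cost (stockout term assumed zero):
`E[TC(a,Q,t)] = C_o Q ∑_n P(T_n < t) + C_h x t − C_h (μ + α λ) t²/2`
`+ C_h Q ∑_n ( t P(T_n < t) − E[T_n 1_{T_n < t}] )`,
where `TC(a,Q,t) = C_o Q R_t + C_h ∫_0^t X_s ds`, `X_s = x − (μ s + α N_s) + Q R_s`. -/
theorem expected_total_cost {Ω : Type*} [MeasurableSpace Ω] (P : Measure Ω)
    [IsProbabilityMeasure P] (N : ℝ → Ω → ℝ) (T : ℕ → Ω → ℝ) (R : ℝ → Ω → ℝ)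
    (x a Q μ α lam t Co Ch : ℝ) (hx : 0 < x) (ha : 0 < a) (hQ : 0 < Q)
    (hμ : 0 < μ) (hα : 0 < α) (hlam : 0 < lam) (ht : 0 < t)
    (hCo : 0 < Co) (hCh : 0 < Ch)
    (hNint : ∀ s, Integrable (N s) P) (hNmean : ∀ s, ∫ ω, N s ω ∂P = lam * s)
    (hTmeas : ∀ n, Measurable (T n)) (hTpos : ∀ n ω, 0 ≤ T n ω)
    (hTint : ∀ n, Integrable (T n) P)
    (hR : ∀ s ω, HasSum (fun n : ℕ => if T n ω < s then (1:ℝ) else 0) (R s ω))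
    (hRt : Integrable (R t) P)
    (hsum : Summable fun n : ℕ => (P {ω | T n ω < t}).toReal)
    (hX : Integrable (fun p : ℝ × Ω => x - (μ * p.1 + α * N p.1 p.2) + Q * R p.1 p.2)
        ((volume.restrict (Set.Ioc 0 t)).prod P)) :
    ∫ ω, (Co * Q * R t ω
        + Ch * ∫ s in (0:ℝ)..t, (x - (μ * s + α * N s ω) + Q * R s ω)) ∂P
      = Co * Q * (∑' n : ℕ, (P {ω | T n ω < t}).toReal)
        + Ch * x * t - Ch * (μ + α * lam) * t ^ 2 / 2
        + Ch * Q * ∑' n : ℕ, (t * (P {ω | T n ω < t}).toReal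
            - ∫ ω in {ω | T n ω < t}, T n ω ∂P) :=
  expected_total_cost_general P N T R x Q μ α lam t Co Ch ht hNint hNmean hTmeas hTpos hR hsum hX
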